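/- arXiv:2509.00856 — 4 statements merged into one kernel-verified Lean document; each statement's English description precedes it below -/
import Mathlib

section
/- Let n be a finite index type, let a be an arbitrary complex n×n matrix with conjugate transpose a*, and let ρ be a Hermitian complex n×n matrix. Then the trace of ρ·(Dρ), where Dρ = aρa* - (1/2)a*aρ - (1/2)ρa*a + a*ρa - (1/2)aa*ρ - (1/2)ρaa*, is a real number that is less than or equal to zero; i.e. the imaginary part of tr(ρ·Dρ) vanishes and its real part satisfies Re tr(ρ·Dρ) ≤ 0. (Nonpositivity of the dissipation operator D of Quantum Optics, Theorem 2.2 i).) -/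
open Matrix

/-- The dissipation operator `D` of Quantum Optics (matrix version):
`Dρ = aρa* - ½a*aρ - ½ρa*a + a*ρa - ½aa*ρ - ½ρaa*`. -/
noncomputable def dissD {n : Type*} [Fintype n] [DecidableEq n] (a ρ : Matrix n n ℂ) : Matrix n n ℂ :=
  a * ρ * aᴴ - (1/2 : ℂ) • (aᴴ * a * ρ) - (1/2 : ℂ) • (ρ * (aᴴ * a))
    + aᴴ * ρ * a - (1/2 : ℂ) • (a * aᴴ * ρ) - (1/2 : ℂ) • (ρ * (a * aᴴ))

/-- Nonpositivity of the dissipation operator `D`: for Hermitian `ρ`,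
`tr(ρ·Dρ)` is real and nonpositive. -/
theorem trace_mul_dissD_im_eq_zero_and_re_nonpos
    {n : Type*} [Fintype n] [DecidableEq n]
    (a ρ : Matrix n n ℂ) (hρ : ρ.IsHermitian) :
    ((ρ * dissD a ρ).trace).im = 0 ∧ ((ρ * dissD a ρ).trace).re ≤ 0 := by
  have cyc4 : ∀ A B C D : Matrix n n ℂ,
      (A * (B * (C * D))).trace = (B * (C * (D * A))).trace := by
    intro A B C D
    rw [trace_mul_comm, mul_assoc, mul_assoc]
  set C : Matrix n n ℂ := a * ρ - ρ * a with hC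
  have hCH : Cᴴ = ρ * aᴴ - aᴴ * ρ := by
    simp [hC, conjTranspose_sub, conjTranspose_mul, hρ.eq]
  have key : (ρ * dissD a ρ).trace = -((C * Cᴴ).trace) := by
    rw [hCH, hC]
    simp only [dissD, mul_sub, sub_mul, mul_add, add_mul, mul_smul_comm, smul_mul_assoc,
      trace_sub, trace_add, trace_smul, smul_eq_mul, mul_assoc]
    have h2 := (cyc4 ρ ρ aᴴ a).symm
    have h5 := (cyc4 ρ ρ a aᴴ).symm
    have hs1 := cyc4 a ρ ρ aᴴ
    have hs2 := cyc4 a ρ aᴴ ρ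
    have h4 := cyc4 ρ aᴴ ρ a
    linear_combination (-(1/2) : ℂ) * h2 + ((1/2) : ℂ) * h5 + hs1 - hs2
  have htr : (C * Cᴴ).trace = ((∑ i, ∑ j, Complex.normSq (C i j) : ℝ) : ℂ) := by
    simp only [Matrix.trace, Matrix.diag, Matrix.mul_apply, Matrix.conjTranspose_apply,
      Complex.star_def, Complex.mul_conj]
    push_cast
    rfl
  rw [key, htr]
  constructor
  · simp
  · simp only [Complex.neg_re, Complex.ofReal_re, neg_nonpos]
    exact Finset.sum_nonneg fun i _ => Finset.sum_nonneg fun j _ => Complex.normSq_nonneg _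
end

section
/- Let n be a finite index type, let a be an arbitrary complex n×n matrix, and let ρ₁, ρ₂ be Hermitian complex n×n matrices. Then tr(ρ₁·(Dρ₂)) = tr((Dρ₁)*·ρ₂), where Dρ = aρa* - (1/2)a*aρ - (1/2)ρa*a + a*ρa - (1/2)aa*ρ - (1/2)ρaa* and * denotes the conjugate transpose. (Symmetry of the dissipation operator D with respect to the Hilbert–Schmidt inner product ⟨ρ₁,ρ₂⟩ = tr(ρ₁ρ₂), Theorem 2.2 i).) -/
open Matrix

/-- Symmetry of the dissipation operator `D` with respect to the
Hilbert–Schmidt inner product: `tr(ρ₁·Dρ₂) = tr((Dρ₁)*·ρ₂)` for Hermitian `ρ₁, ρ₂`. -/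
theorem trace_mul_dissD_symm
    {n : Type*} [Fintype n] [DecidableEq n]
    (a ρ₁ ρ₂ : Matrix n n ℂ) (hρ₁ : ρ₁.IsHermitian) (hρ₂ : ρ₂.IsHermitian) :
    (ρ₁ * dissD a ρ₂).trace = ((dissD a ρ₁)ᴴ * ρ₂).trace := by
  have cyc : ∀ A B C D : Matrix n n ℂ, (A*B*C*D).trace = (D*A*B*C).trace := by
    intro A B C D
    rw [trace_mul_comm (A*B*C) D, ← mul_assoc, ← mul_assoc]
  simp only [dissD, conjTranspose_sub, conjTranspose_add, conjTranspose_smul,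
    conjTranspose_mul, conjTranspose_conjTranspose, hρ₁.eq, hρ₂.eq,
    Matrix.mul_sub, Matrix.sub_mul, Matrix.mul_add, Matrix.add_mul,
    Matrix.mul_smul, Matrix.smul_mul, trace_sub, trace_add, trace_smul,
    RingHom.map_one, ← mul_assoc, smul_eq_mul]
  rw [cyc ρ₁ a ρ₂ aᴴ, cyc ρ₁ ρ₂ aᴴ a, cyc a ρ₁ ρ₂ aᴴ, cyc ρ₁ aᴴ ρ₂ a,
    cyc ρ₁ ρ₂ a aᴴ, cyc aᴴ ρ₁ ρ₂ a]
  rw [show star (1/2 : ℂ) = 1/2 by norm_num]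
  ring
end

section
/- Let n be a finite index type, let a be an arbitrary complex n×n matrix with entries a_{ik}, let d : n → ℝ, and let ρ = diagonal(d) be the real diagonal matrix with entries d_i (regarded as a complex matrix). Then tr(2ρaρa* - a*aρ² - aa*ρ²) = -∑_{i,k} |a_{ik}|²·(d_i - d_k)². (Key identity (3.2) in the proof of nonpositivity of the dissipation operator D, computed in an eigenbasis of ρ.) -/
/-!
In an eigenbasis of `ρ` every trace is an explicit double sum: with `ρ = diagonal d`,
`tr(ρaρa*) = ∑ᵢₖ |aᵢₖ|² dᵢ dₖ`, `tr(a*aρ²) = ∑ᵢₖ |aᵢₖ|² dₖ²` and `tr(aa*ρ²) = ∑ᵢₖ |aᵢₖ|² dᵢ²`.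
The identity is then `dᵢ² - 2 dᵢ dₖ + dₖ² = (dᵢ - dₖ)²`, summed with the weights `|aᵢₖ|²`.
-/

open Matrix

theorem sum_sum_mul_sub_sq {ι R : Type*} [Fintype ι] [CommRing R] (w : ι → ι → R) (d : ι → R) :
    ∑ i, ∑ k, w i k * (d i - d k) ^ 2
      = ∑ i, ∑ k, w i k * d k ^ 2 + ∑ i, ∑ k, w i k * d i ^ 2
        - 2 * ∑ i, ∑ k, w i k * (d i * d k) := by
  simp only [Finset.mul_sum, ← Finset.sum_add_distrib, ← Finset.sum_sub_distrib]
  refine Finset.sum_congr rfl fun i _ => Finset.sum_congr rfl fun k _ => ?_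
  ring

namespace Matrix

variable {m n 𝕜 : Type*} [Fintype m] [Fintype n] [RCLike 𝕜]

theorem trace_diagonal_mul_mul_diagonal_mul_conjTranspose [DecidableEq m] [DecidableEq n]
    (a : Matrix m n 𝕜) (d : m → ℝ) (e : n → ℝ) :
    (diagonal (fun i => (d i : 𝕜)) * a * diagonal (fun k => (e k : 𝕜)) * aᴴ).trace
      = ((∑ i, ∑ k, ‖a i k‖ ^ 2 * (d i * e k) : ℝ) : 𝕜) := by
  push_cast
  simp only [trace, diag_apply, mul_apply (N := aᴴ), mul_diagonal, diagonal_mul,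
    conjTranspose_apply, RCLike.star_def, ← RCLike.mul_conj]
  refine Finset.sum_congr rfl fun i _ => Finset.sum_congr rfl fun k _ => ?_
  ring

theorem trace_conjTranspose_mul_self_mul_diagonal [DecidableEq n]
    (a : Matrix m n 𝕜) (e : n → ℝ) :
    (aᴴ * a * diagonal (fun k => (e k : 𝕜))).trace
      = ((∑ i, ∑ k, ‖a i k‖ ^ 2 * e k : ℝ) : 𝕜) := by
  push_cast
  simp only [trace, diag_apply, mul_diagonal, mul_apply (N := a), conjTranspose_apply,
    RCLike.star_def, ← RCLike.conj_mul, Finset.sum_mul]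
  exact Finset.sum_comm

theorem trace_mul_conjTranspose_self_mul_diagonal [DecidableEq m]
    (a : Matrix m n 𝕜) (d : m → ℝ) :
    (a * aᴴ * diagonal (fun i => (d i : 𝕜))).trace
      = ((∑ i, ∑ k, ‖a i k‖ ^ 2 * d i : ℝ) : 𝕜) := by
  push_cast
  simp only [trace, diag_apply, mul_diagonal, mul_apply (N := aᴴ), conjTranspose_apply,
    RCLike.star_def, ← RCLike.mul_conj, Finset.sum_mul]

end Matrix

/-- Key identity (3.2): for `ρ = diagonal d` with real `d`,
`tr(2ρaρa* - a*aρ² - aa*ρ²) = -∑ᵢₖ |aᵢₖ|²(dᵢ - dₖ)²`. -/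
theorem trace_diag_form_eq_neg_sum
    {n : Type*} [Fintype n] [DecidableEq n]
    (a : Matrix n n ℂ) (d : n → ℝ) (ρ : Matrix n n ℂ)
    (hρ : ρ = Matrix.diagonal (fun i => (d i : ℂ))) :
    ((2 : ℂ) • (ρ * a * ρ * aᴴ) - aᴴ * a * ρ ^ 2 - a * aᴴ * ρ ^ 2).trace
      = -((∑ i, ∑ k, ‖a i k‖ ^ 2 * (d i - d k) ^ 2 : ℝ) : ℂ) := by
  subst hρ
  have hsq : diagonal (fun i => (d i : ℂ)) ^ 2 = diagonal (fun i => ((d i ^ 2 : ℝ) : ℂ)) := by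
    simp [diagonal_pow]
  rw [hsq]
  -- the lemmas above are stated with `RCLike.ofReal`, which is `Complex.ofReal` up to `rfl`
  simp only [← RCLike.ofReal_eq_complex_ofReal]
  rw [trace_sub, trace_sub, trace_smul, smul_eq_mul,
    trace_diagonal_mul_mul_diagonal_mul_conjTranspose, trace_conjTranspose_mul_self_mul_diagonal,
    trace_mul_conjTranspose_self_mul_diagonal, sum_sum_mul_sub_sq (fun i k => ‖a i k‖ ^ 2)]
  push_cast
  ring
end

section
/- Let n be a finite index type, let a be an arbitrary complex n×n matrix with entries a_{ik}, let d : n → ℝ, and let ρ = diagonal(d) (regarded as a complex matrix). If tr(ρ·(Dρ)) = 0, where Dρ = aρa* - (1/2)a*aρ - (1/2)ρa*a + a*ρa - (1/2)aa*ρ - (1/2)ρaa*, then a_{ik} = 0 for every pair (i,k) with d_i ≠ d_k; consequently ρ commutes with a and with a*. (Key step in the proof of injectivity of D, Theorem 2.2 iii): vanishing of the dissipation form forces the eigenspaces of ρ to be invariant under a and a†.) -/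
open Matrix

private lemma dissD_trace_key {n : Type*} [Fintype n] [DecidableEq n]
    (a : Matrix n n ℂ) (d : n → ℝ) :
    (Matrix.diagonal (fun i => (d i : ℂ)) * dissD a (Matrix.diagonal (fun i => (d i : ℂ)))).trace
    = - ∑ i, ∑ k, (Complex.normSq (a i k) : ℂ) * ((d i : ℂ) - d k)^2 := by
  simp only [dissD, Matrix.mul_sub, Matrix.mul_add, Matrix.mul_smul, Matrix.trace_sub,
    Matrix.trace_add, Matrix.trace_smul]
  simp only [Matrix.trace, Matrix.diag, Matrix.mul_apply, Matrix.diagonal_apply,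
    Matrix.conjTranspose_apply, ite_mul, mul_ite, zero_mul, mul_zero,
    Finset.sum_ite_irrel, Finset.sum_const_zero,
    Finset.sum_ite_eq, Finset.sum_ite_eq', Finset.mem_univ, if_true,
    Finset.mul_sum, Finset.sum_mul, smul_eq_mul]
  rw [show (∑ x : n, ∑ i : n, 1 / 2 * ((d x : ℂ) * (star (a i x) * a i x * (d x : ℂ))))
      = ∑ x : n, ∑ i : n, 1 / 2 * ((d i : ℂ) * (star (a x i) * a x i * (d i : ℂ))) from
      Finset.sum_comm,
    show (∑ x : n, ∑ i : n, 1 / 2 * ((d x : ℂ) * ((d x : ℂ) * (star (a i x) * a i x))))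
      = ∑ x : n, ∑ i : n, 1 / 2 * ((d i : ℂ) * ((d i : ℂ) * (star (a x i) * a x i))) from
      Finset.sum_comm,
    show (∑ x : n, ∑ x_1 : n, (d x : ℂ) * (star (a x_1 x) * (d x_1 : ℂ) * a x_1 x))
      = ∑ x : n, ∑ x_1 : n, (d x_1 : ℂ) * (star (a x x_1) * (d x : ℂ) * a x x_1) from
      Finset.sum_comm]
  simp only [← Finset.sum_neg_distrib, ← Finset.sum_sub_distrib, ← Finset.sum_add_distrib]
  refine Finset.sum_congr rfl fun x _ => Finset.sum_congr rfl fun k _ => ?_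
  rw [Complex.star_def]
  linear_combination (2*(d x : ℂ)*(d k) - (d x)^2 - (d k)^2) * Complex.mul_conj (a x k)

/-- Key step in the injectivity proof of `D`: if `ρ = diagonal d` is real diagonal and
`tr(ρ·Dρ) = 0`, then `a i k = 0` whenever `d i ≠ d k`; consequently `ρ` commutes with
`a` and with `a*`. -/
theorem dissD_trace_zero_entries_and_commute
    {n : Type*} [Fintype n] [DecidableEq n]
    (a : Matrix n n ℂ) (d : n → ℝ) (ρ : Matrix n n ℂ)
    (hρ : ρ = Matrix.diagonal (fun i => (d i : ℂ)))
    (h : (ρ * dissD a ρ).trace = 0) :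
    (∀ i k, d i ≠ d k → a i k = 0) ∧ ρ * a = a * ρ ∧ ρ * aᴴ = aᴴ * ρ := by
  subst hρ
  rw [dissD_trace_key, neg_eq_zero] at h
  have hreal : ∑ i, ∑ k, Complex.normSq (a i k) * (d i - d k)^2 = 0 := by
    have := h
    push_cast at this ⊢
    exact_mod_cast this
  have hterm : ∀ i ∈ Finset.univ, ∀ k ∈ Finset.univ,
      Complex.normSq (a i k) * (d i - d k)^2 = 0 := by
    have h1 := (Finset.sum_eq_zero_iff_of_nonneg (fun i _ =>
      Finset.sum_nonneg fun k _ => mul_nonneg (Complex.normSq_nonneg _) (sq_nonneg _))).1 hreal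
    intro i hi k hk
    exact (Finset.sum_eq_zero_iff_of_nonneg (fun k _ =>
      mul_nonneg (Complex.normSq_nonneg _) (sq_nonneg _))).1 (h1 i hi) k hk
  have hzero : ∀ i k, d i ≠ d k → a i k = 0 := by
    intro i k hik
    have := hterm i (Finset.mem_univ i) k (Finset.mem_univ k)
    rcases mul_eq_zero.1 this with h' | h'
    · exact Complex.normSq_eq_zero.1 h'
    · exact absurd (sub_eq_zero.1 ((pow_eq_zero_iff two_ne_zero).1 h')) hik
  refine ⟨hzero, ?_, ?_⟩
  · ext i k
    simp only [Matrix.mul_apply, Matrix.diagonal_apply, ite_mul, mul_ite, zero_mul, mul_zero,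
      Finset.sum_ite_eq, Finset.sum_ite_eq', Finset.mem_univ, if_true]
    by_cases hd : d i = d k
    · rw [hd, mul_comm]
    · rw [hzero i k hd, mul_zero, zero_mul]
  · ext i k
    simp only [Matrix.mul_apply, Matrix.diagonal_apply, Matrix.conjTranspose_apply, ite_mul,
      mul_ite, zero_mul, mul_zero, Finset.sum_ite_eq, Finset.sum_ite_eq', Finset.mem_univ, if_true]
    by_cases hd : d i = d k
    · rw [hd, mul_comm]
    · rw [hzero k i (Ne.symm hd), star_zero, mul_zero, zero_mul]
end
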